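/- With Ẑ^m the truncated shift operators on ℂᴺ as above, for all integers n, m one has ‖ẐⁿẐᵐ − ẐᵐẐⁿ‖_N ≤ ‖ẐⁿẐᵐ − Ẑ^{n+m}‖_N + ‖ẐᵐẐⁿ − Ẑ^{n+m}‖_N ≤ √(|m|/N) + √(|n|/N); in particular the operators asymptotically commute: lim_{N→∞} ‖ẐⁿẐᵐ − ẐᵐẐⁿ‖_N = 0. -/

import Mathlib

open Matrix Filter

/-- The normalized Frobenius norm `‖A‖_N = √((1/N) Tr(Aᴴ A))`. -/
noncomputable def frobN {N : ℕ} (A : Matrix (Fin N) (Fin N) ℂ) : ℝ :=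
  Real.sqrt ((N : ℝ)⁻¹ * (Matrix.trace (A.conjTranspose * A)).re)

/-- The truncated shift operator `Ẑ^m` on `ℂᴺ`. -/
def Zop (N : ℕ) (m : ℤ) : Matrix (Fin N) (Fin N) ℂ :=
  Matrix.of fun i j => if (i : ℤ) = (j : ℤ) + m then 1 else 0

lemma frobN_eq (N : ℕ) (A : Matrix (Fin N) (Fin N) ℂ) :
    frobN A = Real.sqrt ((N:ℝ)⁻¹ * ∑ i, ∑ j, ‖A i j‖^2) := by
  unfold frobN
  congr 2
  rw [Matrix.trace]
  simp only [Matrix.diag_apply, Matrix.mul_apply, Matrix.conjTranspose_apply, Complex.re_sum]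
  rw [Finset.sum_comm]
  refine Finset.sum_congr rfl fun i _ => Finset.sum_congr rfl fun j _ => ?_
  simp [Complex.normSq_apply, Complex.sq_norm, Complex.mul_re,
    Complex.conj_re, Complex.conj_im]

noncomputable def vecOf {N : ℕ} (A : Matrix (Fin N) (Fin N) ℂ) :
    EuclideanSpace ℂ (Fin N × Fin N) :=
  (WithLp.equiv 2 (Fin N × Fin N → ℂ)).symm (fun p => A p.1 p.2)

lemma frobN_eq_norm (N : ℕ) (A : Matrix (Fin N) (Fin N) ℂ) :
    frobN A = Real.sqrt (N:ℝ)⁻¹ * ‖vecOf A‖ := by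
  rw [frobN_eq, EuclideanSpace.norm_eq, ← Real.sqrt_mul (by positivity)]
  congr 1
  rw [Fintype.sum_prod_type]
  rfl

lemma frobN_sub_le (N : ℕ) (A B C : Matrix (Fin N) (Fin N) ℂ) :
    frobN (A - B) ≤ frobN (A - C) + frobN (C - B) := by
  have h : vecOf (A - B) = vecOf (A - C) + vecOf (C - B) := by
    ext p
    simp only [vecOf, PiLp.add_apply, WithLp.equiv_symm_apply, WithLp.ofLp_toLp, Matrix.sub_apply]
    ring
  rw [frobN_eq_norm, frobN_eq_norm, frobN_eq_norm, ← mul_add, h]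
  exact mul_le_mul_of_nonneg_left (norm_add_le _ _) (Real.sqrt_nonneg _)

lemma Zop_mul_apply (N : ℕ) (a b : ℤ) (i j : Fin N) :
    (Zop N a * Zop N b) i j =
      if (0 ≤ (j:ℤ)+b ∧ (j:ℤ)+b < N ∧ (i:ℤ) = (j:ℤ)+b+a) then 1 else 0 := by
  rw [Matrix.mul_apply]
  by_cases h : 0 ≤ (j:ℤ)+b ∧ (j:ℤ)+b < N
  · have hlt : ((j:ℤ)+b).toNat < N := by omega
    set k₀ : Fin N := ⟨((j:ℤ)+b).toNat, hlt⟩ with hk₀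
    have hk₀z : (k₀:ℤ) = (j:ℤ)+b := by simp [hk₀]; omega
    rw [Finset.sum_eq_single k₀]
    · simp only [Zop, Matrix.of_apply, hk₀z]
      by_cases hi : (i:ℤ) = (j:ℤ)+b+a <;> simp [hi, h, hlt]
    · intro k _ hk
      simp only [Zop, Matrix.of_apply]
      have : ¬ ((k:ℤ) = (j:ℤ)+b) := by
        intro hc
        apply hk
        apply Fin.ext
        omega
      simp [this]
    · simp
  · have hc : ¬(0 ≤ (j:ℤ)+b ∧ (j:ℤ)+b < N ∧ (i:ℤ) = (j:ℤ)+b+a) := fun hc => h ⟨hc.1, hc.2.1⟩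
    rw [if_neg hc, Finset.sum_eq_zero]
    intro k _
    simp only [Zop, Matrix.of_apply]
    have : ¬ ((k:ℤ) = (j:ℤ)+b) := by
      have := k.isLt
      omega
    simp [this]

lemma diff_sq (N : ℕ) (a b : ℤ) (i j : Fin N) :
    ‖(Zop N a * Zop N b - Zop N (a+b)) i j‖^2 =
      if ((i:ℤ) = (j:ℤ)+b+a ∧ ¬(0 ≤ (j:ℤ)+b ∧ (j:ℤ)+b < N)) then 1 else 0 := by
  rw [Matrix.sub_apply, Zop_mul_apply]
  simp only [Zop, Matrix.of_apply]
  split_ifs with h1 h2 h3 <;> simp_all <;> omega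

lemma count_bound (N : ℕ) (a b : ℤ) :
    ((Finset.univ.filter (fun p : Fin N × Fin N =>
      (p.1:ℤ) = (p.2:ℤ)+b+a ∧ ¬(0 ≤ (p.2:ℤ)+b ∧ (p.2:ℤ)+b < N))).card : ℝ) ≤ |(b:ℝ)| := by
  have key : (Finset.univ.filter (fun p : Fin N × Fin N =>
      (p.1:ℤ) = (p.2:ℤ)+b+a ∧ ¬(0 ≤ (p.2:ℤ)+b ∧ (p.2:ℤ)+b < N))).card ≤ b.natAbs := by
    rcases le_or_gt 0 b with hb | hb
    · calc _ ≤ (Finset.Ico (N:ℤ) ((N:ℤ)+b)).card := by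
            apply Finset.card_le_card_of_injOn (fun p => (p.2:ℤ)+b)
            · intro p hp
              simp only [Finset.mem_coe, Finset.mem_filter, Finset.mem_univ, true_and] at hp
              obtain ⟨hp1, hp2⟩ := hp
              have := p.2.isLt
              simp only [Finset.mem_coe, Finset.mem_Ico]
              omega
            · intro p hp q hq hpq
              simp only [Finset.coe_filter, Set.mem_setOf_eq] at hp hq
              obtain ⟨-, hp1, -⟩ := hp
              obtain ⟨-, hq1, -⟩ := hq
              simp only at hpq
              have h2 : p.2 = q.2 := Fin.ext (by omega)
              have h1 : p.1 = q.1 := Fin.ext (by omega)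
              exact Prod.ext h1 h2
          _ = b.natAbs := by rw [Int.card_Ico]; omega
    · calc _ ≤ (Finset.Ico b (0:ℤ)).card := by
            apply Finset.card_le_card_of_injOn (fun p => (p.2:ℤ)+b)
            · intro p hp
              simp only [Finset.mem_coe, Finset.mem_filter, Finset.mem_univ, true_and] at hp
              obtain ⟨hp1, hp2⟩ := hp
              have := p.2.isLt
              simp only [Finset.mem_coe, Finset.mem_Ico]
              omega
            · intro p hp q hq hpq
              simp only [Finset.coe_filter, Set.mem_setOf_eq] at hp hq
              obtain ⟨-, hp1, -⟩ := hp
              obtain ⟨-, hq1, -⟩ := hq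
              simp only at hpq
              have h2 : p.2 = q.2 := Fin.ext (by omega)
              have h1 : p.1 = q.1 := Fin.ext (by omega)
              exact Prod.ext h1 h2
          _ = b.natAbs := by rw [Int.card_Ico]; omega
  calc ((Finset.univ.filter _).card : ℝ) ≤ (b.natAbs : ℝ) := by exact_mod_cast key
    _ = |(b:ℝ)| := by rw [Nat.cast_natAbs, Int.cast_abs]

lemma sum_sq_bound (N : ℕ) (a b : ℤ) :
    (∑ i, ∑ j, ‖(Zop N a * Zop N b - Zop N (a+b)) i j‖^2) ≤ |(b:ℝ)| := by
  calc (∑ i, ∑ j, ‖(Zop N a * Zop N b - Zop N (a+b)) i j‖^2)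
      = ∑ p : Fin N × Fin N, (if ((p.1:ℤ) = (p.2:ℤ)+b+a ∧ ¬(0 ≤ (p.2:ℤ)+b ∧ (p.2:ℤ)+b < N)) then (1:ℝ) else 0) := by
        rw [Fintype.sum_prod_type]
        exact Finset.sum_congr rfl fun i _ => Finset.sum_congr rfl fun j _ => diff_sq N a b i j
    _ = ((Finset.univ.filter (fun p : Fin N × Fin N =>
          (p.1:ℤ) = (p.2:ℤ)+b+a ∧ ¬(0 ≤ (p.2:ℤ)+b ∧ (p.2:ℤ)+b < N))).card : ℝ) := by
        rw [Finset.sum_boole]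
    _ ≤ |(b:ℝ)| := count_bound N a b

lemma frobN_diff_le (N : ℕ) (a b : ℤ) :
    frobN (Zop N a * Zop N b - Zop N (a+b)) ≤ Real.sqrt (|(b:ℝ)| / N) := by
  rw [frobN_eq]
  apply Real.sqrt_le_sqrt
  rw [div_eq_inv_mul]
  exact mul_le_mul_of_nonneg_left (sum_sq_bound N a b) (by positivity)

theorem shift_asymptotically_commute (n m : ℤ) :
    (∀ N : ℕ, 1 ≤ N →
      frobN (Zop N n * Zop N m - Zop N m * Zop N n) ≤
        frobN (Zop N n * Zop N m - Zop N (n + m)) +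
          frobN (Zop N m * Zop N n - Zop N (n + m)) ∧
      frobN (Zop N n * Zop N m - Zop N (n + m)) +
          frobN (Zop N m * Zop N n - Zop N (n + m)) ≤
        Real.sqrt ((|m| : ℝ) / N) + Real.sqrt ((|n| : ℝ) / N)) ∧
    Tendsto (fun N : ℕ => frobN (Zop N n * Zop N m - Zop N m * Zop N n)) atTop (nhds 0) := by
  have hbound : ∀ N : ℕ,
      frobN (Zop N n * Zop N m - Zop N (n + m)) +
          frobN (Zop N m * Zop N n - Zop N (n + m)) ≤
        Real.sqrt ((|m| : ℝ) / N) + Real.sqrt ((|n| : ℝ) / N) := by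
    intro N
    have h1 := frobN_diff_le N n m
    have h2 := frobN_diff_le N m n
    rw [add_comm m n] at h2
    exact add_le_add h1 h2
  have htri : ∀ N : ℕ,
      frobN (Zop N n * Zop N m - Zop N m * Zop N n) ≤
        frobN (Zop N n * Zop N m - Zop N (n + m)) +
          frobN (Zop N m * Zop N n - Zop N (n + m)) := by
    intro N
    have h := frobN_sub_le N (Zop N n * Zop N m) (Zop N m * Zop N n) (Zop N (n + m))
    have hneg : frobN (Zop N (n + m) - Zop N m * Zop N n)
        = frobN (Zop N m * Zop N n - Zop N (n + m)) := by
      rw [frobN_eq, frobN_eq]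
      congr 2
      refine Finset.sum_congr rfl fun i _ => Finset.sum_congr rfl fun j _ => ?_
      rw [show (Zop N (n + m) - Zop N m * Zop N n) i j
          = -((Zop N m * Zop N n - Zop N (n + m)) i j) by simp [Matrix.sub_apply]]
      rw [norm_neg]
    rw [hneg] at h
    exact h
  refine ⟨fun N _ => ⟨htri N, hbound N⟩, ?_⟩
  have hzero : ∀ c : ℝ, Tendsto (fun N : ℕ => Real.sqrt (c / N)) atTop (nhds 0) := by
    intro c
    have h1 : Tendsto (fun N : ℕ => c / (N : ℝ)) atTop (nhds 0) :=
      tendsto_const_div_atTop_nhds_zero_nat c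
    have h0 : (0:ℝ) = Real.sqrt 0 := by simp
    rw [h0]
    exact (Real.continuous_sqrt.tendsto 0).comp h1
  have hg : Tendsto (fun N : ℕ => Real.sqrt ((|m| : ℝ) / N) + Real.sqrt ((|n| : ℝ) / N))
      atTop (nhds 0) := by
    simpa using (hzero (|m| : ℝ)).add (hzero (|n| : ℝ))
  refine squeeze_zero (fun N => Real.sqrt_nonneg _) (fun N => ?_) hg
  exact le_trans (htri N) (hbound N)
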